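/- arXiv:1707.06450 — 3 statements merged into one kernel-verified Lean document; each statement's English description precedes it below -/
import Mathlib

section
/- Let K be a field of characteristic zero and let σ be an automorphism of K[x₁,...,xₙ,p₁,...,pₙ] preserving the standard Poisson bracket, of the form σ(xᵢ) = xᵢ + fᵢ + (terms of height > k) and σ(pᵢ) = pᵢ + gᵢ + (terms of height > k), where fᵢ, gᵢ are homogeneous of degree k ≥ 2. Then ∂fᵢ/∂pⱼ = ∂fⱼ/∂pᵢ and ∂gᵢ/∂xⱼ = ∂gⱼ/∂xᵢ for all i, j. -/
open MvPolynomial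

/-- The standard Poisson bracket on `K[x₁,…,xₙ,p₁,…,pₙ]` (variables indexed by
`Fin n ⊕ Fin n`, `inl i ↔ xᵢ`, `inr i ↔ pᵢ`): it satisfies `{xᵢ,xⱼ} = {pᵢ,pⱼ} = 0`
and `{pᵢ,xⱼ} = δᵢⱼ`, extended as a biderivation. -/
noncomputable def poissonBracket {K : Type*} [CommRing K] {n : ℕ}
    (f g : MvPolynomial (Fin n ⊕ Fin n) K) : MvPolynomial (Fin n ⊕ Fin n) K :=
  ∑ i : Fin n,
    (pderiv (Sum.inr i) f * pderiv (Sum.inl i) g -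
      pderiv (Sum.inl i) f * pderiv (Sum.inr i) g)

/-!
Write `σ(xᵢ) = xᵢ + fᵢ + aᵢ` and `σ(pᵢ) = pᵢ + gᵢ + bᵢ` with `aᵢ, bᵢ` of height `> k`.
The bracket lowers heights by at most `2`, so in the degree `k - 1` component of
`0 = σ{xᵢ,xⱼ} = {σ(xᵢ),σ(xⱼ)}` only `{xᵢ,fⱼ} + {fᵢ,xⱼ} = ∂fᵢ/∂pⱼ - ∂fⱼ/∂pᵢ` survives:
`{xᵢ,xⱼ}` is constant and `{fᵢ,fⱼ}` is homogeneous of degree `2k - 2 > k - 1` because `k ≥ 2`.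
The same computation with `pᵢ, pⱼ` gives the statement for the `gᵢ`.
-/

namespace MvPolynomial

variable {R τ : Type*} [CommSemiring R] {m : ℕ} {P : MvPolynomial τ R}

theorem forall_homogeneousComponent_eq_zero_iff :
    (∀ d ≤ m, homogeneousComponent d P = 0) ↔ ∀ s : τ →₀ ℕ, s.degree ≤ m → coeff s P = 0 := by
  constructor
  · intro hP s hs
    simpa [coeff_homogeneousComponent] using congrArg (coeff s) (hP _ hs)
  · intro hP d hd
    ext s
    rw [coeff_homogeneousComponent, coeff_zero]
    split_ifs with hs
    · exact hP s (hs ▸ hd)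
    · rfl

theorem homogeneousComponent_mul_eq_zero_of_right {Q : MvPolynomial τ R}
    (hQ : ∀ d ≤ m, homogeneousComponent d Q = 0) (P : MvPolynomial τ R) :
    ∀ d ≤ m, homogeneousComponent d (P * Q) = 0 := by
  classical
  rw [forall_homogeneousComponent_eq_zero_iff] at hQ ⊢
  intro s hs
  rw [coeff_mul]
  refine Finset.sum_eq_zero fun x hx => ?_
  have hle : x.2.degree ≤ s.degree :=
    Finsupp.degree_mono (Finset.HasAntidiagonal.mem_antidiagonal.mp hx ▸ le_add_self)
  rw [hQ x.2 (hle.trans hs), mul_zero]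

theorem homogeneousComponent_pderiv_eq_zero (hP : ∀ d ≤ m + 1, homogeneousComponent d P = 0)
    (v : τ) : ∀ d ≤ m, homogeneousComponent d (pderiv v P) = 0 := by
  rw [forall_homogeneousComponent_eq_zero_iff] at hP ⊢
  intro s hs
  rw [coeff_pderiv, hP _ (by simpa using hs), zero_mul]

end MvPolynomial

section PoissonBracket

variable {K : Type*} [CommRing K] {n : ℕ}

theorem poissonBracket_add_left (a a' b : MvPolynomial (Fin n ⊕ Fin n) K) :
    poissonBracket (a + a') b = poissonBracket a b + poissonBracket a' b := by
  simp only [poissonBracket, map_add, ← Finset.sum_add_distrib]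
  exact Finset.sum_congr rfl fun _ _ => by ring

theorem poissonBracket_add_right (a b b' : MvPolynomial (Fin n ⊕ Fin n) K) :
    poissonBracket a (b + b') = poissonBracket a b + poissonBracket a b' := by
  simp only [poissonBracket, map_add, ← Finset.sum_add_distrib]
  exact Finset.sum_congr rfl fun _ _ => by ring

theorem poissonBracket_skew (a b : MvPolynomial (Fin n ⊕ Fin n) K) :
    -poissonBracket b a = poissonBracket a b := by
  simp only [poissonBracket, ← Finset.sum_neg_distrib]
  exact Finset.sum_congr rfl fun _ _ => by ring

theorem poissonBracket_X_inl (i : Fin n) (G : MvPolynomial (Fin n ⊕ Fin n) K) :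
    poissonBracket (X (Sum.inl i)) G = -pderiv (Sum.inr i) G := by
  rw [poissonBracket, Finset.sum_eq_single i]
  · simp
  · intro l _ hl
    simp [hl.symm]
  · simp

theorem poissonBracket_X_inr (i : Fin n) (G : MvPolynomial (Fin n ⊕ Fin n) K) :
    poissonBracket (X (Sum.inr i)) G = pderiv (Sum.inl i) G := by
  rw [poissonBracket, Finset.sum_eq_single i]
  · simp
  · intro l _ hl
    simp [hl.symm]
  · simp

theorem MvPolynomial.IsHomogeneous.poissonBracket {F G : MvPolynomial (Fin n ⊕ Fin n) K}
    {e m : ℕ} (hF : F.IsHomogeneous (e + 1)) (hG : G.IsHomogeneous (m + 1)) :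
    (poissonBracket F G).IsHomogeneous (e + m) :=
  IsHomogeneous.sum _ _ _ fun _ _ =>
    (hF.pderiv.mul hG.pderiv).sub (hF.pderiv.mul hG.pderiv)

theorem homogeneousComponent_poissonBracket_eq_zero_of_right {m : ℕ}
    {S : MvPolynomial (Fin n ⊕ Fin n) K} (hS : ∀ d ≤ m + 1, homogeneousComponent d S = 0)
    (P : MvPolynomial (Fin n ⊕ Fin n) K) :
    ∀ d ≤ m, homogeneousComponent d (poissonBracket P S) = 0 := by
  intro d hd
  have hmul := fun w P' => homogeneousComponent_mul_eq_zero_of_right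
    (homogeneousComponent_pderiv_eq_zero hS w) P' d hd
  simp [poissonBracket, hmul]

theorem homogeneousComponent_poissonBracket_eq_zero_of_left {m : ℕ}
    {S : MvPolynomial (Fin n ⊕ Fin n) K} (hS : ∀ d ≤ m + 1, homogeneousComponent d S = 0)
    (P : MvPolynomial (Fin n ⊕ Fin n) K) :
    ∀ d ≤ m, homogeneousComponent d (poissonBracket S P) = 0 := fun d hd => by
  rw [← poissonBracket_skew, map_neg,
    homogeneousComponent_poissonBracket_eq_zero_of_right hS P d hd, neg_zero]

theorem homogeneousComponent_poissonBracket_X_add_add {m : ℕ} {α β : Fin n ⊕ Fin n}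
    {F G A B : MvPolynomial (Fin n ⊕ Fin n) K}
    (hF : F.IsHomogeneous (m + 2)) (hG : G.IsHomogeneous (m + 2))
    (hA : ∀ d ≤ m + 2, homogeneousComponent d A = 0)
    (hB : ∀ d ≤ m + 2, homogeneousComponent d B = 0) :
    homogeneousComponent (m + 1) (poissonBracket (X α + F + A) (X β + G + B)) =
      poissonBracket (X α) G + poissonBracket F (X β) := by
  have hX : ∀ γ, (X γ : MvPolynomial (Fin n ⊕ Fin n) K).IsHomogeneous (0 + 1) :=
    isHomogeneous_X K
  have hF' : F.IsHomogeneous (m + 1 + 1) := hF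
  have hG' : G.IsHomogeneous (m + 1 + 1) := hG
  simp only [poissonBracket_add_left, poissonBracket_add_right, map_add,
    homogeneousComponent_poissonBracket_eq_zero_of_right hB _ _ le_rfl,
    homogeneousComponent_poissonBracket_eq_zero_of_left hA _ _ le_rfl,
    homogeneousComponent_of_mem ((hX α).poissonBracket (hX β)),
    homogeneousComponent_of_mem ((hX α).poissonBracket hG'),
    homogeneousComponent_of_mem (hF'.poissonBracket (hX β)),
    homogeneousComponent_of_mem (hF'.poissonBracket hG')]
  simpa using add_comm _ _

theorem poissonBracket_X_add_poissonBracket_X_eq_zero {m : ℕ} {α β : Fin n ⊕ Fin n}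
    {F G A B : MvPolynomial (Fin n ⊕ Fin n) K}
    (hF : F.IsHomogeneous (m + 2)) (hG : G.IsHomogeneous (m + 2))
    (hA : ∀ d ≤ m + 2, homogeneousComponent d (A - X α - F) = 0)
    (hB : ∀ d ≤ m + 2, homogeneousComponent d (B - X β - G) = 0)
    (hAB : poissonBracket A B = 0) :
    poissonBracket (X α) G + poissonBracket F (X β) = 0 := by
  have h := homogeneousComponent_poissonBracket_X_add_add (α := α) (β := β) hF hG hA hB
  rwa [sub_sub, add_sub_cancel, sub_sub, add_sub_cancel, hAB, map_zero, eq_comm] at h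

end PoissonBracket

theorem degree_k_component_closed_general (K : Type*) [Field K] (n k : ℕ) (hk : 2 ≤ k)
    (σ : MvPolynomial (Fin n ⊕ Fin n) K ≃ₐ[K] MvPolynomial (Fin n ⊕ Fin n) K)
    (hpois : ∀ u v, poissonBracket (σ u) (σ v) = σ (poissonBracket u v))
    (f g : Fin n → MvPolynomial (Fin n ⊕ Fin n) K)
    (hf : ∀ i, (f i).IsHomogeneous k) (hg : ∀ i, (g i).IsHomogeneous k)
    (hx : ∀ i, ∀ d ≤ k,
      homogeneousComponent d (σ (X (Sum.inl i)) - X (Sum.inl i) - f i) = 0)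
    (hp : ∀ i, ∀ d ≤ k,
      homogeneousComponent d (σ (X (Sum.inr i)) - X (Sum.inr i) - g i) = 0) :
    (∀ i j, pderiv (Sum.inr j) (f i) = pderiv (Sum.inr i) (f j)) ∧
      (∀ i j, pderiv (Sum.inl j) (g i) = pderiv (Sum.inl i) (g j)) := by
  obtain ⟨m, rfl⟩ : ∃ m, k = m + 2 := ⟨k - 2, by omega⟩
  have hσ : ∀ α β, poissonBracket (X α) (X β) = 0 → poissonBracket (σ (X α)) (σ (X β)) = 0 :=
    fun α β h => by rw [hpois, h, map_zero]
  constructor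
  · intro i j
    have h := poissonBracket_X_add_poissonBracket_X_eq_zero (hf i) (hf j) (hx i) (hx j)
      (hσ _ _ (by simp [poissonBracket_X_inl]))
    rw [poissonBracket_X_inl, ← poissonBracket_skew, poissonBracket_X_inl] at h
    linear_combination h
  · intro i j
    have h := poissonBracket_X_add_poissonBracket_X_eq_zero (hg i) (hg j) (hp i) (hp j)
      (hσ _ _ (by simp [poissonBracket_X_inr]))
    rw [poissonBracket_X_inr, ← poissonBracket_skew, poissonBracket_X_inr] at h
    linear_combination -h

/-- if `σ` is a Poisson automorphism with
`σ(xᵢ) = xᵢ + fᵢ + (height > k)`, `σ(pᵢ) = pᵢ + gᵢ + (height > k)`, `fᵢ, gᵢ` homogeneous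
of degree `k ≥ 2`, then `∂fᵢ/∂pⱼ = ∂fⱼ/∂pᵢ` and `∂gᵢ/∂xⱼ = ∂gⱼ/∂xᵢ`. -/
theorem degree_k_component_closed (K : Type*) [Field K] [CharZero K] (n k : ℕ) (hk : 2 ≤ k)
    (σ : MvPolynomial (Fin n ⊕ Fin n) K ≃ₐ[K] MvPolynomial (Fin n ⊕ Fin n) K)
    (hpois : ∀ u v, poissonBracket (σ u) (σ v) = σ (poissonBracket u v))
    (f g : Fin n → MvPolynomial (Fin n ⊕ Fin n) K)
    (hf : ∀ i, (f i).IsHomogeneous k) (hg : ∀ i, (g i).IsHomogeneous k)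
    (hx : ∀ i, ∀ d ≤ k,
      homogeneousComponent d (σ (X (Sum.inl i)) - X (Sum.inl i) - f i) = 0)
    (hp : ∀ i, ∀ d ≤ k,
      homogeneousComponent d (σ (X (Sum.inr i)) - X (Sum.inr i) - g i) = 0) :
    (∀ i j, pderiv (Sum.inr j) (f i) = pderiv (Sum.inr i) (f j)) ∧
      (∀ i j, pderiv (Sum.inl j) (g i) = pderiv (Sum.inl i) (g j)) :=
  degree_k_component_closed_general K n k hk σ hpois f g hf hg hx hp
end

section
/- Let K be a field and let (σ_k) be a sequence of automorphisms of K[x₁,...,xₙ] such that for every k, Ht((σ_k⁻¹ ∘ σ_{k+1})(xᵢ) − xᵢ) ≥ k+1 for all i. Then for each i the sequence of polynomials σ_k(xᵢ) converges in the formal power series topology: the homogeneous component of degree d of σ_k(xᵢ) is eventually constant in k, for every d. -/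
open MvPolynomial

/-
Polynomials of order at least `k` (all monomials of degree `≥ k`) form an ideal, and an algebra
endomorphism that fixes every variable modulo an ideal fixes every polynomial modulo it. Hence if
`(σ_k⁻¹ ∘ σ_{k+1})(xⱼ) ≡ xⱼ` modulo order `k + 1`, then `σ_{k+1}(p) ≡ σ_k(p)` modulo order `k + 1`
for every `p`, so the degree-`d` component of `σ_k(xᵢ)` no longer changes once `k ≥ d`.
-/

namespace MvPolynomial

variable {σ R : Type*}

section CommSemiring

variable [CommSemiring R]

variable (σ R) in
/-- Membership in `orderIdeal σ R k` is the paper's `Ht f ≥ k`. -/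
noncomputable def orderIdeal (k : ℕ) : Ideal (MvPolynomial σ R) :=
  Ideal.span ((fun m => monomial m (1 : R)) '' {m | k ≤ m.degree})

theorem mem_orderIdeal_iff {k : ℕ} {f : MvPolynomial σ R} :
    f ∈ orderIdeal σ R k ↔ ∀ d < k, homogeneousComponent d f = 0 := by
  rw [orderIdeal, mem_ideal_span_monomial_image]
  constructor
  · intro hf d hd
    refine homogeneousComponent_eq_zero' d f fun m hm => ?_
    obtain ⟨s, hks, hsm⟩ := hf m hm
    exact (hd.trans_le (hks.trans (Finsupp.degree_mono hsm))).ne'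
  · intro hf m hm
    refine ⟨m, ?_, le_rfl⟩
    by_contra hmk
    have hcoeff := congrArg (coeff m) (hf m.degree (not_le.mp hmk))
    rw [coeff_homogeneousComponent, if_pos rfl, coeff_zero] at hcoeff
    exact mem_support_iff.mp hm hcoeff

end CommSemiring

section CommRing

variable [CommRing R] {J : Ideal (MvPolynomial σ R)}

theorem sub_mem_of_forall_X_sub_mem (ψ : MvPolynomial σ R →ₐ[R] MvPolynomial σ R)
    (hψ : ∀ j, ψ (X j) - X j ∈ J) (p : MvPolynomial σ R) : ψ p - p ∈ J := by
  have hmk : (Ideal.Quotient.mkₐ R J).comp ψ = Ideal.Quotient.mkₐ R J :=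
    algHom_ext fun j => Ideal.Quotient.eq.mpr (hψ j)
  exact Ideal.Quotient.eq.mp (AlgHom.congr_fun hmk p)

theorem sub_mem_of_forall_symm_X_sub_mem (φ ψ : MvPolynomial σ R ≃ₐ[R] MvPolynomial σ R)
    (h : ∀ j, ψ (φ.symm (X j)) - X j ∈ J) (p : MvPolynomial σ R) : ψ p - φ p ∈ J := by
  have hψφ := sub_mem_of_forall_X_sub_mem (ψ.toAlgHom.comp φ.symm.toAlgHom)
    (fun j => by rw [AlgHom.comp_apply]; exact h j) (φ p)
  rwa [AlgHom.comp_apply, AlgEquiv.coe_toAlgHom, AlgEquiv.coe_toAlgHom,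
    AlgEquiv.symm_apply_apply] at hψφ

end CommRing

end MvPolynomial

/-- if `(σ_k)` is a sequence of automorphisms of `K[x₁,…,xₙ]` with
`Ht((σ_k⁻¹ ∘ σ_{k+1})(xᵢ) − xᵢ) ≥ k+1` for all `i` (composition convention:
`(φ∘ψ)(xᵢ)` is obtained by substituting `ψ(xⱼ)` for `xⱼ` in `φ(xᵢ)`, i.e. it is
`ψ(φ(xᵢ))` as algebra maps), then each sequence of polynomials `σ_k(xᵢ)` converges in
the formal power series topology: every fixed-degree homogeneous component is
eventually constant in `k`. -/
theorem tame_sequence_converges (K : Type*) [Field K] (n : ℕ)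
    (σ : ℕ → (MvPolynomial (Fin n) K ≃ₐ[K] MvPolynomial (Fin n) K))
    (h : ∀ k : ℕ, ∀ i : Fin n, ∀ d ≤ k,
      homogeneousComponent d ((σ (k + 1)) ((σ k).symm (X i)) - X i) = 0) :
    ∀ (i : Fin n) (d : ℕ), ∃ N : ℕ, ∀ k ≥ N,
      homogeneousComponent d ((σ k) (X i)) = homogeneousComponent d ((σ N) (X i)) := by
  intro i d
  have step : ∀ k ≥ d, homogeneousComponent d ((σ (k + 1)) (X i)) =
      homogeneousComponent d ((σ k) (X i)) := by
    intro k hk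
    have hclose := sub_mem_of_forall_symm_X_sub_mem (J := orderIdeal (Fin n) K (k + 1)) (σ k)
      (σ (k + 1)) (fun j => mem_orderIdeal_iff.mpr fun e he => h k j e (Nat.lt_succ_iff.mp he))
      (X i)
    rw [← sub_eq_zero, ← map_sub]
    exact mem_orderIdeal_iff.mp hclose d (Nat.lt_succ_of_le hk)
  exact ⟨d, fun k hk => Nat.le_induction rfl (fun k hk ih => (step k hk).trans ih) k hk⟩
end

section
/- Let K be a field of characteristic zero. The Nagata map ν: K[x,y,z] → K[x,y,z] defined by ν(x) = x + (x² − yz)z, ν(y) = y + 2(x² − yz)x + (x² − yz)²z, ν(z) = z, is an algebra automorphism of K[x,y,z]. -/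
open MvPolynomial

noncomputable def nagataF (K : Type*) [Field K] :
    MvPolynomial (Fin 3) K →ₐ[K] MvPolynomial (Fin 3) K :=
  aeval ![X 0 + (X 0 ^ 2 - X 1 * X 2) * X 2,
    X 1 + 2 * (X 0 ^ 2 - X 1 * X 2) * X 0 + (X 0 ^ 2 - X 1 * X 2) ^ 2 * X 2,
    X 2]

noncomputable def nagataG (K : Type*) [Field K] :
    MvPolynomial (Fin 3) K →ₐ[K] MvPolynomial (Fin 3) K :=
  aeval ![X 0 - (X 0 ^ 2 - X 1 * X 2) * X 2,
    X 1 - 2 * (X 0 ^ 2 - X 1 * X 2) * X 0 + (X 0 ^ 2 - X 1 * X 2) ^ 2 * X 2,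
    X 2]

lemma nagataFG (K : Type*) [Field K] :
    (nagataF K).comp (nagataG K) = AlgHom.id K (MvPolynomial (Fin 3) K) := by
  apply MvPolynomial.algHom_ext
  intro i
  fin_cases i <;>
    simp [nagataF, nagataG, Fin.isValue, Matrix.cons_val_zero, Matrix.cons_val_one,
      Matrix.head_cons, map_ofNat] <;> ring

lemma nagataGF (K : Type*) [Field K] :
    (nagataG K).comp (nagataF K) = AlgHom.id K (MvPolynomial (Fin 3) K) := by
  apply MvPolynomial.algHom_ext
  intro i
  fin_cases i <;>
    simp [nagataF, nagataG, Fin.isValue, Matrix.cons_val_zero, Matrix.cons_val_one,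
      Matrix.head_cons, map_ofNat] <;> ring

/-- the Nagata map `x ↦ x + (x²−yz)z`, `y ↦ y + 2(x²−yz)x + (x²−yz)²z`,
`z ↦ z` is an algebra automorphism of `K[x,y,z]` (char 0). Here `x = X 0`, `y = X 1`,
`z = X 2` in `MvPolynomial (Fin 3) K`. -/
theorem nagata_is_automorphism (K : Type*) [Field K] [CharZero K] :
    ∃ ν : MvPolynomial (Fin 3) K ≃ₐ[K] MvPolynomial (Fin 3) K,
      ν (X 0) = X 0 + (X 0 ^ 2 - X 1 * X 2) * X 2 ∧
      ν (X 1) = X 1 + 2 * (X 0 ^ 2 - X 1 * X 2) * X 0 +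
        (X 0 ^ 2 - X 1 * X 2) ^ 2 * X 2 ∧
      ν (X 2) = X 2 := by
  refine ⟨AlgEquiv.ofAlgHom (nagataF K) (nagataG K) (nagataFG K) (nagataGF K), ?_, ?_, ?_⟩ <;>
    simp [nagataF, AlgEquiv.ofAlgHom]
end
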